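/- arXiv:0705.2867 — 8 statements merged into one kernel-verified Lean document; each statement's English description precedes it below -/
import Mathlib

section
/- Let (U_n)_{n∈ℕ} be a sequence of pairwise distinct subsets of a topological space X, with Marczewski map 𝒰(x) = {n ∈ ℕ : x ∈ U_n}. Then (U_n) is an open γ-cover of X if and only if 𝒰(x) ∈ Fr for every x ∈ X and the multivalued map Φ : X ⇒ Fr defined by Φ(x) = P(𝒰(x)) ∩ Fr = {A ∈ Fr : A ⊆ 𝒰(x)} is lower semicontinuous. -/
open Set Filter Topology

attribute [local instance] Classical.propDecidable

/-- The Cantor space `{0,1}^ℕ`, representing the power set `P(ℕ)`. -/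
abbrev PN : Type := ℕ → Bool

/-- The Fréchet filter: the set of all cofinite subsets of ℕ, as a subspace of `P(ℕ)`. -/
def Fr : Set PN := {A : PN | {n : ℕ | A n = false}.Finite}

/-- The Marczewski map of a sequence of subsets of `X`:
`marc U x` is (the characteristic function of) `{n : ℕ | x ∈ U n}`. -/
noncomputable def marc {X : Type*} (U : ℕ → Set X) (x : X) : PN :=
  fun n => decide (x ∈ U n)

/-- Lower semicontinuity of a multivalued map `Φ : X ⇒ Y`. -/
def LSC {X Y : Type*} [TopologicalSpace X] [TopologicalSpace Y] (Φ : X → Set Y) : Prop :=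
  ∀ V : Set Y, IsOpen V → IsOpen {x : X | (Φ x ∩ V).Nonempty}

lemma marc_mem_Fr {X : Type*} (U : ℕ → Set X) (x : X)
    (h : ∀ᶠ n in atTop, x ∈ U n) : marc U x ∈ Fr := by
  rw [← Nat.cofinite_eq_atTop, eventually_cofinite] at h
  refine h.subset ?_
  intro n hn
  simp only [marc, mem_setOf_eq, decide_eq_false_iff_not] at hn
  exact hn

/-- Lemma: a pairwise distinct sequence `U` of subsets of `X` is an open γ-cover iff
its Marczewski map takes values in `Fr` and the multivalued map
`Φ(x) = P(𝒰(x)) ∩ Fr` is lower semicontinuous. -/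
theorem open_gammaCover_iff_lsc (X : Type*) [TopologicalSpace X]
    (U : ℕ → Set X) (hU : Function.Injective U) :
    ((∀ n, IsOpen (U n)) ∧ ∀ x : X, ∀ᶠ n in atTop, x ∈ U n) ↔
      ((∀ x : X, marc U x ∈ Fr) ∧
        LSC (fun x : X => {A : ↥Fr | ∀ n, (A : PN) n = true → marc U x n = true})) := by
  constructor
  · rintro ⟨hopen, hcov⟩
    refine ⟨fun x => marc_mem_Fr U x (hcov x), ?_⟩
    intro V hV
    rw [isOpen_iff_forall_mem_open]
    rintro x ⟨A, hAΦ, hAV⟩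
    obtain ⟨W, hW, hWV⟩ := isOpen_induced_iff.mp hV
    obtain ⟨I, u, hu, hpi⟩ := isOpen_pi_iff.mp hW (A : PN) (by rw [← hWV] at hAV; exact hAV)
    refine ⟨⋂ n ∈ I.filter (fun n => (A : PN) n = true), U n, ?_, ?_, ?_⟩
    · intro x' hx'
      simp only [Set.mem_iInter] at hx'
      set B : PN := fun n => (A : PN) n && marc U x' n with hB
      have hBFr : B ∈ Fr := by
        have h1 : {n : ℕ | B n = false} ⊆
            {n : ℕ | (A : PN) n = false} ∪ {n : ℕ | marc U x' n = false} := by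
          intro n hn
          simp only [hB, mem_setOf_eq, Bool.and_eq_false_iff] at hn
          rcases hn with h | h
          · exact Or.inl h
          · exact Or.inr h
        exact ((A.2).union (marc_mem_Fr U x' (hcov x'))).subset h1
      refine ⟨⟨B, hBFr⟩, ?_, ?_⟩
      · intro n hn
        simp only [hB, Bool.and_eq_true] at hn
        exact hn.2
      · rw [← hWV]
        apply hpi
        intro n hn
        have hAn : B n = (A : PN) n := by
          by_cases hA : (A : PN) n = true
          · have : x' ∈ U n := hx' n (Finset.mem_filter.mpr ⟨hn, hA⟩)
            simp [hB, hA, marc, this]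
          · simp only [Bool.not_eq_true] at hA
            simp [hB, hA]
        show B n ∈ u n
        rw [hAn]
        exact (hu n hn).2
    · exact isOpen_biInter_finset (fun n _ => hopen n)
    · simp only [Set.mem_iInter]
      intro n hn
      have hmx : marc U x n = true := hAΦ n (Finset.mem_filter.mp hn).2
      simpa [marc] using hmx
  · rintro ⟨hFr, hlsc⟩
    constructor
    · intro n
      have hcont : Continuous (fun A : ↥Fr => (A : PN) n) :=
        (continuous_apply n).comp continuous_subtype_val
      have hV : IsOpen {A : ↥Fr | (A : PN) n = true} :=
        (isOpen_discrete ({true} : Set Bool)).preimage hcont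
      have h := hlsc _ hV
      convert h using 1
      ext x
      simp only [Set.mem_setOf_eq]
      constructor
      · intro hx
        exact ⟨⟨marc U x, hFr x⟩, fun m hm => hm, by simp [marc, hx]⟩
      · rintro ⟨A, hA1, hA2⟩
        have := hA1 n hA2
        simpa [marc] using this
    · intro x
      have h := hFr x
      rw [← Nat.cofinite_eq_atTop, eventually_cofinite]
      refine h.subset ?_
      intro n hn
      simp only [mem_setOf_eq, mem_compl_iff] at hn ⊢
      simpa [marc] using hn
end

section
/- Let (U_n)_{n∈ℕ} be a pairwise distinct open γ-cover of a topological space X, with Marczewski map 𝒰(x) = {n ∈ ℕ : x ∈ U_n}. Then the following are equivalent: (1) (U_n) is γ-shrinkable, i.e. there is a clopen γ-cover (C_n) of X with C_n ⊆ U_n for all n; (2) the multivalued map Φ : X ⇒ Fr defined by Φ(x) = P(𝒰(x)) ∩ Fr = {A ∈ Fr : A ⊆ 𝒰(x)} has a continuous selection φ : X → Fr. -/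
open Set Filter Topology

attribute [local instance] Classical.propDecidable

/-- Lemma: a pairwise distinct open γ-cover `U` of `X` is γ-shrinkable iff the multivalued
map `Φ(x) = P(𝒰(x)) ∩ Fr` has a continuous selection. -/
theorem gammaShrinkable_iff_selection (X : Type*) [TopologicalSpace X]
    (U : ℕ → Set X) (hU : Function.Injective U)
    (hopen : ∀ n, IsOpen (U n)) (hγ : ∀ x : X, ∀ᶠ n in atTop, x ∈ U n) :
    (∃ C : ℕ → Set X, (∀ n, IsClopen (C n)) ∧ (∀ n, C n ⊆ U n) ∧
        ∀ x : X, ∀ᶠ n in atTop, x ∈ C n) ↔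
      (∃ φ : X → ↥Fr, Continuous φ ∧
        ∀ x : X, ∀ n, (φ x : PN) n = true → marc U x n = true) := by
  constructor
  · rintro ⟨C, hclopen, hsub, hCγ⟩
    have hmem : ∀ x : X, (fun n => decide (x ∈ C n)) ∈ Fr := by
      intro x
      obtain ⟨N, hN⟩ := eventually_atTop.mp (hCγ x)
      apply Set.Finite.subset (Set.finite_Iio N)
      intro n hn
      simp only [Set.mem_setOf_eq, decide_eq_false_iff_not] at hn
      by_contra h'
      exact hn (hN n (le_of_not_gt h'))
    refine ⟨fun x => ⟨fun n => decide (x ∈ C n), hmem x⟩, ?_, ?_⟩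
    · apply Continuous.subtype_mk
      apply continuous_pi
      intro n
      have : (fun x : X => decide (x ∈ C n)) = (C n).boolIndicator := by
        funext x
        by_cases hx : x ∈ C n <;> simp [Set.boolIndicator, hx]
      rw [this, continuous_boolIndicator_iff_isClopen]
      exact hclopen n
    · intro x n h
      simp only [decide_eq_true_eq] at h
      simp [marc, hsub n h]
  · rintro ⟨φ, hφc, hφsel⟩
    refine ⟨fun n => {x | (φ x : PN) n = true}, ?_, ?_, ?_⟩
    · intro n
      have hc : Continuous fun x : X => (φ x : PN) n :=
        (continuous_apply n).comp (continuous_subtype_val.comp hφc)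
      have : {x : X | (φ x : PN) n = true} = (fun x => (φ x : PN) n) ⁻¹' {true} := by
        ext x; simp
      show IsClopen {x : X | (φ x : PN) n = true}
      rw [this]
      exact (isClopen_discrete {true}).preimage hc
    · intro n x hx
      have := hφsel x n hx
      simpa [marc] using this
    · intro x
      have hfin : {n : ℕ | (φ x : PN) n = false}.Finite := (φ x).2
      obtain ⟨N, hN⟩ := hfin.bddAbove
      filter_upwards [eventually_gt_atTop N] with n hn
      show (φ x : PN) n = true
      by_contra h
      have : n ∈ {n : ℕ | (φ x : PN) n = false} := by
        simpa using Bool.eq_false_iff.mpr h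
      exact absurd (hN this) (not_le.mpr hn)
end

section
/- Let X ⊆ ℝ∖ℚ carry the subspace topology from ℝ, and assume |X| < 𝔟. Then every B_Fr-valued lower semicontinuous multivalued map Φ : X ⇒ Fr has a continuous selection. -/
open Set Filter Topology

attribute [local instance] Classical.propDecidable

/-- The family `B_Fr` of sets of the form `{A ∈ Fr : A ∩ s = ∅}`, `s` a finite subset of ℕ. -/
def BFr : Set (Set ↥Fr) :=
  {S : Set ↥Fr | ∃ s : Finset ℕ, S = {A : ↥Fr | ∀ n ∈ s, (A : PN) n = false}}

/-- The unbounding number 𝔟: the least cardinality of a `≤*`-unbounded subset of `ℕ^ℕ`. -/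
noncomputable def bCard : Cardinal :=
  sInf {c : Cardinal | ∃ S : Set (ℕ → ℕ), Cardinal.mk ↥S = c ∧
    ∀ g : ℕ → ℕ, ∃ f ∈ S, ¬ ∀ᶠ n in atTop, f n ≤ g n}

lemma irr_clopen_interval {X : Set ℝ} (hX : ∀ x ∈ X, Irrational x) (p q : ℚ) :
    IsClopen {x : ↥X | (p:ℝ) < ↑x ∧ (↑x:ℝ) < (q:ℝ)} := by
  constructor
  · have h : {x : ↥X | (p:ℝ) < ↑x ∧ (↑x:ℝ) < (q:ℝ)} =
        (fun x : ↥X => (x:ℝ)) ⁻¹' (Set.Icc (p:ℝ) (q:ℝ)) := by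
      ext x
      simp only [Set.mem_setOf_eq, Set.mem_preimage, Set.mem_Icc]
      have hirr := hX x.1 x.2
      constructor
      · rintro ⟨h1, h2⟩; exact ⟨h1.le, h2.le⟩
      · rintro ⟨h1, h2⟩
        exact ⟨h1.lt_of_ne (hirr.ne_rat p).symm, h2.lt_of_ne (hirr.ne_rat q)⟩
    rw [h]
    exact isClosed_Icc.preimage continuous_subtype_val
  · have h : {x : ↥X | (p:ℝ) < ↑x ∧ (↑x:ℝ) < (q:ℝ)} =
        (fun x : ↥X => (x:ℝ)) ⁻¹' (Set.Ioo (p:ℝ) (q:ℝ)) := rfl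
    rw [h]
    exact isOpen_Ioo.preimage continuous_subtype_val

lemma clopen_between {X : Set ℝ} (hX : ∀ x ∈ X, Irrational x)
    {F U : Set ↥X} (hF : IsClosed F) (hU : IsOpen U) (hFU : F ⊆ U) :
    ∃ W : Set ↥X, IsClopen W ∧ F ⊆ W ∧ W ⊆ U := by
  classical
  set I : ℚ × ℚ → Set ↥X := fun pq => {x | (pq.1:ℝ) < ↑x ∧ (↑x:ℝ) < (pq.2:ℝ)} with hIdef
  have hclopen : ∀ pq, IsClopen (I pq) := fun pq => irr_clopen_interval hX pq.1 pq.2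
  have hbase : ∀ (O : Set ↥X), IsOpen O → ∀ x ∈ O, ∃ pq : ℚ × ℚ, x ∈ I pq ∧ I pq ⊆ O := by
    intro O hO x hx
    obtain ⟨ε, hε, hball⟩ := Metric.isOpen_iff.mp hO x hx
    obtain ⟨p, hp1, hp2⟩ := exists_rat_btwn (show (↑x:ℝ) - ε < ↑x by linarith)
    obtain ⟨q, hq1, hq2⟩ := exists_rat_btwn (show (↑x:ℝ) < ↑x + ε by linarith)
    refine ⟨(p, q), ⟨hp2, hq1⟩, ?_⟩
    rintro y ⟨h1, h2⟩
    apply hball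
    rw [Metric.mem_ball, Subtype.dist_eq, Real.dist_eq, abs_lt]
    constructor <;> simp only at h1 h2 <;> linarith
  let e : ℕ ≃ ℚ × ℚ := (Denumerable.eqv (ℚ × ℚ)).symm
  set J : ℕ → Set ↥X := fun i => I (e i) with hJdef
  have hJclopen : ∀ i, IsClopen (J i) := fun i => hclopen (e i)
  set C : ℕ → Prop := fun i => J i ⊆ U ∨ J i ∩ F = ∅ with hCdef
  have cover : ∀ x : ↥X, ∃ i, C i ∧ x ∈ J i := by
    intro x
    by_cases hx : x ∈ U
    · obtain ⟨pq, h1, h2⟩ := hbase U hU x hx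
      exact ⟨e.symm pq, Or.inl (by simpa [hJdef, e.apply_symm_apply] using h2),
        by simpa [hJdef, e.apply_symm_apply] using h1⟩
    · have hx' : x ∈ Fᶜ := fun hxF => hx (hFU hxF)
      obtain ⟨pq, h1, h2⟩ := hbase Fᶜ hF.isOpen_compl x hx'
      refine ⟨e.symm pq, Or.inr ?_, by simpa [hJdef, e.apply_symm_apply] using h1⟩
      rw [Set.eq_empty_iff_forall_notMem]
      intro y ⟨hy1, hy2⟩
      have : y ∈ I pq := by simpa [hJdef, e.apply_symm_apply] using hy1
      exact h2 this hy2
  set idx : ↥X → ℕ := fun x => Nat.find (cover x) with hidx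
  have hmemJ : ∀ x, x ∈ J (idx x) := fun x => (Nat.find_spec (cover x)).2
  have hCidx : ∀ x, C (idx x) := fun x => (Nat.find_spec (cover x)).1
  have key : ∀ x : ↥X, ∃ N : Set ↥X, IsOpen N ∧ x ∈ N ∧ ∀ y ∈ N, idx y = idx x := by
    intro x
    refine ⟨J (idx x) ∩ ⋂ j ∈ Finset.range (idx x), (if C j then (J j)ᶜ else Set.univ),
      ?_, ?_, ?_⟩
    · refine ((hJclopen _).isOpen).inter (isOpen_biInter_finset fun j _ => ?_)
      by_cases h : C j
      · simpa [h] using (hJclopen j).isClosed.isOpen_compl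
      · simp [h]
    · refine ⟨hmemJ x, ?_⟩
      simp only [Set.mem_iInter]
      intro j hj
      by_cases h : C j
      · have := Nat.find_min (cover x) (Finset.mem_range.mp hj)
        simp only [h, if_true]
        intro hxj
        exact this ⟨h, hxj⟩
      · simp [h]
    · rintro y ⟨hy1, hy2⟩
      simp only [Set.mem_iInter] at hy2
      have hle : idx y ≤ idx x := Nat.find_le ⟨hCidx x, hy1⟩
      rcases lt_or_eq_of_le hle with hlt | heq
      · exfalso
        have hc := hCidx y
        have := hy2 (idx y) (Finset.mem_range.mpr hlt)
        simp only [hc, if_true] at this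
        exact this (hmemJ y)
      · exact heq
  set W : Set ↥X := {x | J (idx x) ⊆ U} with hWdef
  have hWopen : IsOpen W := by
    rw [isOpen_iff_mem_nhds]
    intro x hx
    obtain ⟨N, hNo, hxN, hNeq⟩ := key x
    exact Filter.mem_of_superset (hNo.mem_nhds hxN)
      (fun y hy => by simpa [hWdef, hNeq y hy] using hx)
  have hWcopen : IsOpen Wᶜ := by
    rw [isOpen_iff_mem_nhds]
    intro x hx
    obtain ⟨N, hNo, hxN, hNeq⟩ := key x
    exact Filter.mem_of_superset (hNo.mem_nhds hxN)
      (fun y hy => by simpa [hWdef, Set.mem_compl_iff, hNeq y hy] using hx)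
  refine ⟨W, ⟨isOpen_compl_iff.mp hWcopen, hWopen⟩, ?_, ?_⟩
  · intro x hxF
    rcases hCidx x with h | h
    · exact h
    · exact absurd (Set.eq_empty_iff_forall_notMem.mp h x ⟨hmemJ x, hxF⟩) (fun h' => h')
  · intro x hx
    exact hx (hmemJ x)

/-- Corollary: if `X ⊆ ℝ∖ℚ` and `|X| < 𝔟`, then every `B_Fr`-valued lsc multivalued map
`Φ : X ⇒ Fr` has a continuous selection. -/
theorem selection_of_card_lt_b (X : Set ℝ) (hX : ∀ x ∈ X, Irrational x)
    (hcard : Cardinal.mk ↥X < bCard)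
    (Φ : ↥X → Set ↥Fr) (hΦ : ∀ x, Φ x ∈ BFr) (hlsc : LSC Φ) :
    ∃ φ : ↥X → ↥Fr, Continuous φ ∧ ∀ x, φ x ∈ Φ x := by
  classical
  choose s hs using hΦ
  set F : ℕ → Set ↥X := fun n => {x | n ∈ s x} with hFdef
  -- F n is closed
  have hFclosed : ∀ n, IsClosed (F n) := by
    intro n
    have hVopen : IsOpen {A : ↥Fr | (A : PN) n = true} := by
      have h1 : IsOpen ((fun B : PN => B n) ⁻¹' {true}) :=
        IsOpen.preimage (continuous_apply n) (isOpen_discrete ({true} : Set Bool))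
      have h2 : {B : PN | B n = true} = (fun B : PN => B n) ⁻¹' {true} := rfl
      have h3 : IsOpen {B : PN | B n = true} := h2 ▸ h1
      exact h3.preimage continuous_subtype_val
    have heq : F n = {x : ↥X | (Φ x ∩ {A : ↥Fr | (A : PN) n = true}).Nonempty}ᶜ := by
      ext x
      simp only [hFdef, Set.mem_setOf_eq, Set.mem_compl_iff]
      constructor
      · rintro hn ⟨A, hA1, hA2⟩
        rw [hs x] at hA1
        have := hA1 n hn
        rw [Set.mem_setOf_eq] at hA2
        simp [this] at hA2
      · intro h
        by_contra hn
        apply h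
        have hAFr : (fun m => decide (m ∉ s x)) ∈ Fr := by
          apply Set.Finite.subset (s x).finite_toSet
          intro m hm
          simp only [Set.mem_setOf_eq, decide_eq_false_iff_not, not_not] at hm
          exact hm
        refine ⟨⟨fun m => decide (m ∉ s x), hAFr⟩, ?_, ?_⟩
        · rw [hs x]
          intro m hm
          simp [hm]
        · simp [hn]
    rw [heq]
    exact (hlsc _ hVopen).isClosed_compl
  -- the scale functions f x
  set f : ↥X → ℕ → ℕ := fun x n =>
    if h : ∃ k : ℕ, ∀ y ∈ F n, (1:ℝ)/(k+1) ≤ dist x y then Nat.find h else 0 with hfdef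
  have hfspec : ∀ x n, x ∉ F n → ∀ y ∈ F n, (1:ℝ)/(f x n + 1) ≤ dist x y := by
    intro x n hx
    have hex : ∃ k : ℕ, ∀ y ∈ F n, (1:ℝ)/(k+1) ≤ dist x y := by
      obtain ⟨ε, hε, hball⟩ := Metric.isOpen_iff.mp (hFclosed n).isOpen_compl x hx
      obtain ⟨k, hk⟩ := exists_nat_one_div_lt hε
      refine ⟨k, fun y hy => ?_⟩
      by_contra hlt
      push_neg at hlt
      have : y ∈ Metric.ball x ε := by
        rw [Metric.mem_ball, dist_comm]
        exact lt_trans hlt hk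
      exact (hball this) hy
    simp only [hfdef, dif_pos hex]
    exact Nat.find_spec hex
  -- boundedness from |X| < b
  have hbound : ∃ g : ℕ → ℕ, ∀ x : ↥X, ∀ᶠ n in atTop, f x n ≤ g n := by
    by_contra hcon
    have hcon' : ∀ g : ℕ → ℕ, ∃ x : ↥X, ¬ ∀ᶠ n in atTop, f x n ≤ g n := by
      intro g
      by_contra h
      push_neg at h
      exact hcon ⟨g, h⟩
    have hmem : Cardinal.mk ↥(Set.range f) ∈ {c : Cardinal | ∃ S : Set (ℕ → ℕ),
        Cardinal.mk ↥S = c ∧ ∀ g : ℕ → ℕ, ∃ f' ∈ S, ¬ ∀ᶠ n in atTop, f' n ≤ g n} := by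
      refine ⟨Set.range f, rfl, fun g => ?_⟩
      obtain ⟨x, hx⟩ := hcon' g
      exact ⟨f x, Set.mem_range_self x, hx⟩
    have h1 : bCard ≤ Cardinal.mk ↥(Set.range f) := csInf_le' hmem
    have h2 : Cardinal.mk ↥(Set.range f) ≤ Cardinal.mk ↥X := Cardinal.mk_range_le
    exact absurd (h1.trans h2) (not_le.mpr hcard)
  obtain ⟨g, hg⟩ := hbound
  -- the open expansions U n
  set U : ℕ → Set ↥X := fun n => ⋃ y ∈ F n, Metric.ball y ((1:ℝ)/(g n + 1)) with hUdef
  have hUopen : ∀ n, IsOpen (U n) := fun n =>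
    isOpen_biUnion (fun _ _ => Metric.isOpen_ball)
  have hFU : ∀ n, F n ⊆ U n := by
    intro n x hx
    exact Set.mem_biUnion hx (Metric.mem_ball_self (by positivity))
  -- point finiteness
  have hptfin : ∀ x : ↥X, {n | x ∈ U n}.Finite := by
    intro x
    obtain ⟨N, hN⟩ := Filter.eventually_atTop.mp (hg x)
    apply Set.Finite.subset (((s x).finite_toSet).union (Set.finite_Iio N))
    intro n hn
    simp only [Set.mem_setOf_eq] at hn
    by_cases h1 : n < N
    · exact Or.inr h1
    by_cases h2 : n ∈ s x
    · exact Or.inl h2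
    exfalso
    have hxF : x ∉ F n := h2
    obtain ⟨y, hyF, hyb⟩ := Set.mem_iUnion₂.mp hn
    rw [Metric.mem_ball] at hyb
    have hle : (1:ℝ)/(g n + 1) ≤ 1/(f x n + 1) := by
      apply one_div_le_one_div_of_le (by positivity)
      have h3 := hN n (not_lt.mp h1)
      have h4 : (f x n : ℝ) ≤ (g n : ℝ) := Nat.cast_le.mpr h3
      linarith
    have := hfspec x n hxF y hyF
    linarith
  -- clopen shrinking
  have hW : ∀ n, ∃ W : Set ↥X, IsClopen W ∧ F n ⊆ W ∧ W ⊆ U n :=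
    fun n => clopen_between hX (hFclosed n) (hUopen n) (hFU n)
  choose W hWclopen hFW hWU using hW
  have hmemFr : ∀ x : ↥X, (fun m => decide (x ∉ W m)) ∈ Fr := by
    intro x
    apply Set.Finite.subset (hptfin x)
    intro m hm
    simp only [Set.mem_setOf_eq, decide_eq_false_iff_not, not_not] at hm
    exact hWU m hm
  refine ⟨fun x => ⟨fun m => decide (x ∉ W m), hmemFr x⟩, ?_, ?_⟩
  · apply Continuous.subtype_mk
    apply continuous_pi
    intro m
    rw [continuous_discrete_rng]
    intro b
    cases b
    · have : (fun x : ↥X => decide (x ∉ W m)) ⁻¹' {false} = W m := by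
        ext x
        simp [Set.mem_preimage]
      rw [this]
      exact (hWclopen m).isOpen
    · have : (fun x : ↥X => decide (x ∉ W m)) ⁻¹' {true} = (W m)ᶜ := by
        ext x
        simp [Set.mem_preimage]
      rw [this]
      exact (hWclopen m).isClosed.isOpen_compl
  · intro x
    rw [hs x]
    intro n hn
    have hxW : x ∈ W n := hFW n hn
    simp [hxW]
end

section
/- Let B ⊆ ℕ^↑ be a 𝔟-scale and let X = B ∪ Q carry the subspace topology from Inc. Then there exists a lower semicontinuous multivalued map Φ : X ⇒ Fr, with each Φ(x) a nonempty clopen subset of Fr, such that: (i) Φ(x) = Fr for every x ∈ B; and (ii) for every Y ⊆ X with Q ⊆ Y and every continuous φ : Y → Fr (Y with the subspace topology) satisfying φ(y) ∈ Φ(y) for all y ∈ Y, one has |Y| < |X| = 𝔟. -/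
open Set Filter Topology

attribute [local instance] Classical.propDecidable

/-- A 𝔟-scale: a `≤*`-increasing, `≤*`-unbounded family of strictly increasing functions,
enumerated injectively by the ordinals below 𝔟. -/
structure IsBScale (b : {o : Ordinal // o < bCard.ord} → (ℕ → ℕ)) : Prop where
  strictMono : ∀ α, StrictMono (b α)
  inj : Function.Injective b
  mono : ∀ α β : {o : Ordinal // o < bCard.ord}, α < β → ∀ᶠ n in atTop, b α n ≤ b β n
  unbounded : ∀ g : ℕ → ℕ, ∃ α, ¬ ∀ᶠ n in atTop, b α n ≤ g n

/-- The set `Inc` of nondecreasing elements of `(ℕ∞)^ℕ`. -/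
def Inc : Set (ℕ → ℕ∞) := {x : ℕ → ℕ∞ | Monotone x}

/-- The set `Q` of eventually infinite elements of `Inc`. -/
def Qset : Set (ℕ → ℕ∞) := {x : ℕ → ℕ∞ | Monotone x ∧ ∀ᶠ n in atTop, x n = ⊤}

/-- The inclusion of `ℕ^ℕ` into `(ℕ∞)^ℕ`. -/
def toInc (f : ℕ → ℕ) : ℕ → ℕ∞ := fun n => (f n : ℕ∞)


/-! The map `Φ` sends a point of `Q` to the clopen set of those `A ∈ Fr` that omit its largest
finite value, and every other point to all of `Fr`. Lower semicontinuity at a point of `Q` or `B`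
holds because nearby points of `Q` other than the point itself have a large largest finite value,
and a cofinite set stays in an open set after deleting one sufficiently large element.

Let `φ` be a continuous selection on `Y ⊇ Q`. Continuity at the point `v⌢∞⋯` of `Q` (where `v`
is a finite increasing sequence) gives a radius `R(v)`: every `y ∈ Y` extending `v` with
`y(|v|) > R(v)` has `max v ∉ φ(y)`. Since `φ(b)` is cofinite, each `b ∈ B ∩ Y` therefore
eventually satisfies `b(k) ≤ R(b↾k)`, so it is bounded by one of countably many functions obtained
by iterating `R` over finitely many prefixes. A single function `g` dominates all of these, hence all of `B ∩ Y`;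
as `B` is an unbounded `≤*`-chain, `B ∩ Y` lies below some `b_β` and `|Y| < 𝔟`. -/

lemma exists_forall_eventually_le (F : ℕ → ℕ → ℕ) :
    ∃ g : ℕ → ℕ, ∀ i, ∀ᶠ n in atTop, F i n ≤ g n :=
  ⟨fun n => (Finset.range (n + 1)).sup fun i => F i n, fun i =>
    eventually_atTop.2 ⟨i, fun n hn =>
      Finset.le_sup (f := fun i => F i n) (Finset.mem_range.2 (Nat.lt_succ_of_le hn))⟩⟩

lemma Set.Countable.exists_forall_eventually_le {S : Set (ℕ → ℕ)} (hS : S.Countable) :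
    ∃ g : ℕ → ℕ, ∀ f ∈ S, ∀ᶠ n in atTop, f n ≤ g n := by
  rcases S.eq_empty_or_nonempty with rfl | hne
  · exact ⟨0, by simp⟩
  obtain ⟨F, rfl⟩ := hS.exists_eq_range hne
  obtain ⟨g, hg⟩ := _root_.exists_forall_eventually_le F
  exact ⟨g, forall_mem_range.2 hg⟩

lemma aleph0_lt_bCard : Cardinal.aleph0 < bCard := by
  obtain ⟨S, hS, hunb⟩ : bCard ∈ {c : Cardinal | ∃ S : Set (ℕ → ℕ), Cardinal.mk ↥S = c ∧
      ∀ g : ℕ → ℕ, ∃ f ∈ S, ¬ ∀ᶠ n in atTop, f n ≤ g n} :=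
    csInf_mem ⟨_, univ, rfl, fun g => ⟨g + 1, trivial, fun h => by
      obtain ⟨n, hn⟩ := h.exists
      simp at hn⟩⟩
  rw [← hS, ← not_le, Cardinal.mk_le_aleph0_iff, countable_coe_iff]
  intro hc
  obtain ⟨g, hg⟩ := hc.exists_forall_eventually_le
  obtain ⟨f, hf, hfg⟩ := hunb g
  exact hfg (hg f hf)

/-- `prefixBound R c j` bounds the first `j` values of every `f` with `f k ≤ max c (R k (f↾k))`. -/
def prefixBound (R : (k : ℕ) → (Fin k → ℕ) → ℕ) (c : ℕ) : ℕ → ℕ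
  | 0 => c
  | j + 1 => max (prefixBound R c j)
      ((Fintype.piFinset fun _ : Fin j => Finset.range (prefixBound R c j + 1)).sup (R j))

lemma monotone_prefixBound (R : (k : ℕ) → (Fin k → ℕ) → ℕ) (c : ℕ) :
    Monotone (prefixBound R c) :=
  monotone_nat_of_le_succ fun _ => le_max_left _ _

lemma le_prefixBound {R : (k : ℕ) → (Fin k → ℕ) → ℕ} {c : ℕ} {f : ℕ → ℕ}
    (hf : ∀ k, f k ≤ c ∨ f k ≤ R k fun i => f i) : ∀ j, ∀ i < j, f i ≤ prefixBound R c j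
  | 0, i, hi => absurd hi (Nat.not_lt_zero i)
  | j + 1, i, hi => by
    rcases Nat.lt_succ_iff_lt_or_eq.1 hi with hij | rfl
    · exact (le_prefixBound hf j i hij).trans (le_max_left _ _)
    rcases hf i with hc | hR
    · exact hc.trans ((monotone_prefixBound R c (Nat.zero_le _)).trans (le_max_left _ _))
    refine hR.trans (le_max_of_le_right (Finset.le_sup ?_))
    simpa [Fintype.mem_piFinset, Nat.lt_succ_iff] using fun a : Fin i => le_prefixBound hf i a a.2

def extendTop (k : ℕ) (v : Fin k → ℕ) : ℕ → ℕ∞ :=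
  fun n => if h : n < k then (v ⟨n, h⟩ : ℕ∞) else ⊤

/-- The largest finite value of `x ∈ Q` (the supremum is taken in `ℕ`, where `toNat ⊤ = 0`). -/
noncomputable def maxFin (x : ℕ → ℕ∞) : ℕ := ⨆ n, (x n).toNat

@[simp]
lemma extendTop_apply_fin {k : ℕ} (v : Fin k → ℕ) (i : Fin k) : extendTop k v i = v i := by
  simp [extendTop]

lemma extendTop_mem_Qset {k : ℕ} {v : Fin k → ℕ} (hv : Monotone v) : extendTop k v ∈ Qset := by
  refine ⟨fun i j hij => ?_, eventually_atTop.2 ⟨k, fun n hn => by simp [extendTop, not_lt.2 hn]⟩⟩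
  by_cases hj : j < k
  · simpa [extendTop, hj, lt_of_le_of_lt hij hj] using
      hv (Fin.mk_le_mk.2 hij : (⟨i, _⟩ : Fin k) ≤ ⟨j, hj⟩)
  · simp [extendTop, hj]

lemma eq_extendTop {x : ℕ → ℕ∞} (hx : Monotone x) {k : ℕ} {v : Fin k → ℕ}
    (hv : ∀ i : Fin k, x i = v i) (htop : x k = ⊤) : x = extendTop k v := by
  funext n
  by_cases hn : n < k
  · simpa [extendTop, hn] using hv ⟨n, hn⟩
  · simpa [extendTop, hn, htop] using hx (not_lt.1 hn)

lemma Qset_subset_range_extendTop :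
    Qset ⊆ range fun p : (Σ k, Fin k → ℕ) => extendTop p.1 p.2 := by
  rintro x ⟨hx, htop⟩
  have hex : ∃ k, x k = ⊤ := htop.exists
  refine ⟨⟨Nat.find hex, fun i => (x i).toNat⟩,
    (eq_extendTop hx (fun i => ?_) (Nat.find_spec hex)).symm⟩
  exact (ENat.natCast_toNat (Nat.find_min hex i.2)).symm

lemma countable_Qset : Qset.Countable :=
  (countable_range _).mono Qset_subset_range_extendTop

lemma toInc_injective : Function.Injective toInc :=
  fun f g h => funext fun n => by simpa [toInc] using congrFun h n

lemma toInc_notMem_Qset (f : ℕ → ℕ) : toInc f ∉ Qset := fun h => by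
  obtain ⟨n, hn⟩ := h.2.exists
  simp [toInc] at hn

lemma toNat_le_maxFin {x : ℕ → ℕ∞} (hx : x ∈ Qset) (n : ℕ) : (x n).toNat ≤ maxFin x :=
  le_ciSup (f := fun n => (x n).toNat)
    (isBoundedUnder_of_eventually_le (a := 0) (hx.2.mono fun n hn => by simp [hn])).bddAbove_range n

lemma maxFin_extendTop {k : ℕ} {v : Fin k → ℕ} (hv : Monotone v) (hk : 0 < k) :
    maxFin (extendTop k v) = v ⟨k - 1, by omega⟩ := by
  refine le_antisymm (ciSup_le fun n => ?_) ?_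
  · by_cases hn : n < k
    · simpa [extendTop, hn] using hv (Fin.mk_le_mk.2 (by omega) : (⟨n, hn⟩ : Fin k) ≤ ⟨k - 1, _⟩)
    · simp [extendTop, hn]
  · simpa [extendTop, hk] using toNat_le_maxFin (extendTop_mem_Qset hv) (k - 1)

lemma eventually_true_of_mem_Fr {A : PN} (hA : A ∈ Fr) : ∀ᶠ n in atTop, A n = true := by
  rw [← Nat.cofinite_eq_atTop, eventually_cofinite]
  simpa [Fr] using hA

lemma update_false_mem_Fr {A : PN} (hA : A ∈ Fr) (p : ℕ) : Function.update A p false ∈ Fr :=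
  (hA.insert p).subset fun n (hn : Function.update A p false n = false) => by
    rw [Function.update_apply] at hn
    split_ifs at hn with h
    exacts [Or.inl h, Or.inr hn]

lemma eventually_exists_mem_apply_eq_false {V : Set ↥Fr} (hV : IsOpen V) {A₀ : ↥Fr}
    (hA₀ : A₀ ∈ V) : ∀ᶠ p in atTop, ∃ A ∈ V, (A : PN) p = false := by
  have hlim : Tendsto (fun p => (⟨Function.update A₀.1 p false, update_false_mem_Fr A₀.2 p⟩ : ↥Fr))
      atTop (𝓝 A₀) := by
    refine tendsto_subtype_rng.2 (tendsto_pi_nhds.2 fun n => tendsto_const_nhds.congr' ?_)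
    filter_upwards [eventually_gt_atTop n] with p hp
    exact (Function.update_of_ne hp.ne _ _).symm
  filter_upwards [hlim.eventually (hV.mem_nhds hA₀)] with p hp
  exact ⟨_, hp, Function.update_self _ _ _⟩

lemma isClopen_setOf_apply_eq_false (p : ℕ) : IsClopen {A : ↥Fr | (A : PN) p = false} :=
  (isClopen_discrete {false}).preimage ((continuous_apply p).comp continuous_subtype_val)

def omitMax (x : ℕ → ℕ∞) : Set ↥Fr :=
  if x ∈ Qset then {A : ↥Fr | (A : PN) (maxFin x) = false} else univ

lemma omitMax_of_mem {x : ℕ → ℕ∞} (hx : x ∈ Qset) :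
    omitMax x = {A : ↥Fr | (A : PN) (maxFin x) = false} :=
  if_pos hx

lemma omitMax_of_notMem {x : ℕ → ℕ∞} (hx : x ∉ Qset) : omitMax x = univ :=
  if_neg hx

lemma isClopen_omitMax (x : ℕ → ℕ∞) : IsClopen (omitMax x) := by
  unfold omitMax
  split_ifs
  exacts [isClopen_setOf_apply_eq_false _, isClopen_univ]

lemma omitMax_nonempty (x : ℕ → ℕ∞) : (omitMax x).Nonempty := by
  refine ⟨⟨fun n => decide (n ≠ maxFin x), (finite_singleton (maxFin x)).subset fun n hn => by
    simpa using hn⟩, ?_⟩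
  unfold omitMax
  split_ifs <;> simp

lemma eventually_apply_eq_natCast {x₀ : ℕ → ℕ∞} {n m : ℕ} (h : x₀ n = m) :
    ∀ᶠ x in 𝓝 x₀, x n = (m : ℕ∞) := by
  have : ∀ᶠ y in 𝓝 (x₀ n), y = (m : ℕ∞) := by
    rw [h, ENat.nhds_natCast]
    exact eventually_pure.2 rfl
  exact (continuous_apply n).continuousAt.eventually this

lemma eventually_omitMax_inter_nonempty {x₀ : ℕ → ℕ∞}
    (hx₀ : x₀ ∈ Qset ∨ ∃ f : ℕ → ℕ, StrictMono f ∧ toInc f = x₀) {V : Set ↥Fr} (hV : IsOpen V)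
    (hne : (omitMax x₀ ∩ V).Nonempty) : ∀ᶠ x in 𝓝 x₀, (omitMax x ∩ V).Nonempty := by
  have ⟨A₀, _, hA₀V⟩ := hne
  obtain ⟨c, hc⟩ := eventually_atTop.1 (eventually_exists_mem_apply_eq_false hV hA₀V)
  suffices ∀ᶠ x in 𝓝 x₀, x ∈ Qset → c ≤ maxFin x ∨ x = x₀ by
    filter_upwards [this] with x hx
    by_cases hxQ : x ∈ Qset
    · rcases hx hxQ with h | rfl
      · obtain ⟨A, hAV, hA⟩ := hc _ h
        exact ⟨A, by rwa [omitMax_of_mem hxQ], hAV⟩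
      · exact hne
    · exact ⟨A₀, by simp [omitMax_of_notMem hxQ], hA₀V⟩
  rcases hx₀ with hx₀ | ⟨f, hf, rfl⟩
  · obtain ⟨⟨k, v⟩, rfl⟩ := Qset_subset_range_extendTop hx₀
    have hagree : ∀ᶠ x in 𝓝 (extendTop k v), ∀ i : Fin k, x i = (v i : ℕ∞) :=
      eventually_all.2 fun i => eventually_apply_eq_natCast (extendTop_apply_fin v i)
    have hlarge : ∀ᶠ x in 𝓝 (extendTop k v), (c : ℕ∞) < x k :=
      (continuous_apply k).continuousAt.eventually (lt_mem_nhds (by simp [extendTop]))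
    filter_upwards [hagree, hlarge] with x hxv hxk hxQ
    by_cases htop : x k = ⊤
    · exact Or.inr (eq_extendTop hxQ.1 hxv htop)
    · refine Or.inl ((Nat.le_of_lt ?_).trans (toNat_le_maxFin hxQ k))
      lift x k to ℕ using htop with m
      simpa using hxk
  · filter_upwards [eventually_apply_eq_natCast (rfl : toInc f c = f c)] with x hx hxQ
    exact Or.inl (hf.le_apply.trans (by simpa [hx] using toNat_le_maxFin hxQ c))

lemma lsc_omitMax {X : Set (ℕ → ℕ∞)}
    (hX : ∀ x ∈ X, x ∈ Qset ∨ ∃ f : ℕ → ℕ, StrictMono f ∧ toInc f = x) :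
    LSC fun x : ↥X => omitMax x :=
  fun _ hV => isOpen_iff_mem_nhds.2 fun x hx =>
    (continuous_subtype_val.tendsto x).eventually
      (eventually_omitMax_inter_nonempty (hX x x.2) hV hx)

lemma exists_natCast_lt_imp_mem {k : ℕ} {v : Fin k → ℕ} {t : Set (ℕ → ℕ∞)}
    (ht : t ∈ 𝓝 (extendTop k v)) :
    ∃ r : ℕ, ∀ z : ℕ → ℕ∞, Monotone z → (∀ i : Fin k, z i = v i) → (r : ℕ∞) < z k → z ∈ t := by
  rw [nhds_pi, Filter.mem_pi] at ht
  obtain ⟨I, hI, s, hs, hst⟩ := ht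
  have hlarge : ∀ᶠ r : ℕ in atTop, ∀ n ∈ I, k ≤ n → Ioi (r : ℕ∞) ⊆ s n := by
    refine hI.eventually_all.2 fun n _ => ?_
    by_cases hkn : k ≤ n
    · have hsn : s n ∈ 𝓝 (⊤ : ℕ∞) := by simpa [extendTop, not_lt.2 hkn] using hs n
      obtain ⟨a, ha, has⟩ := nhds_top_basis.mem_iff.1 hsn
      lift a to ℕ using ha.ne
      filter_upwards [eventually_ge_atTop a] with r hr _
      exact (Ioi_subset_Ioi (by exact_mod_cast hr)).trans has
    · exact Eventually.of_forall fun _ h => absurd h hkn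
  obtain ⟨r, hr⟩ := hlarge.exists
  refine ⟨r, fun z hz hzv hzk => hst fun n hn => ?_⟩
  by_cases hnk : n < k
  · simpa [hzv ⟨n, hnk⟩, extendTop, hnk] using mem_of_mem_nhds (hs n)
  · exact hr n hn (not_lt.1 hnk) (hzk.trans_le (hz (not_lt.1 hnk)))

theorem exists_eventually_le_of_continuous_selection {Y : Type*} [TopologicalSpace Y]
    {e : Y → ℕ → ℕ∞} (he : IsInducing e) (hQ : Qset ⊆ range e) {φ : Y → ↥Fr}
    (hφ : Continuous φ) (hsel : ∀ y, φ y ∈ omitMax (e y)) :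
    ∃ g : ℕ → ℕ, ∀ y (f : ℕ → ℕ), StrictMono f → e y = toInc f → ∀ᶠ n in atTop, f n ≤ g n := by
  have htrap : ∀ k (v : Fin k → ℕ), ∃ r : ℕ, Monotone v → ∀ y, Monotone (e y) →
      (∀ i : Fin k, e y i = v i) → (r : ℕ∞) < e y k →
        (φ y : PN) (maxFin (extendTop k v)) = false := by
    intro k v
    by_cases hv : Monotone v
    swap
    · exact ⟨0, fun h => absurd h hv⟩
    have hvQ := extendTop_mem_Qset hv
    obtain ⟨y₀, hy₀⟩ := hQ hvQ
    have hy₀sel : (φ y₀ : PN) (maxFin (extendTop k v)) = false := by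
      simpa [hy₀, omitMax_of_mem hvQ] using hsel y₀
    have hpre : φ ⁻¹' {A | (A : PN) (maxFin (extendTop k v)) = false} ∈ comap e (𝓝 (e y₀)) :=
      he.nhds_eq_comap y₀ ▸
        hφ.continuousAt ((isClopen_setOf_apply_eq_false _).isOpen.mem_nhds hy₀sel)
    obtain ⟨t, ht, hts⟩ := mem_comap.1 hpre
    rw [hy₀] at ht
    obtain ⟨r, hr⟩ := exists_natCast_lt_imp_mem ht
    exact ⟨r, fun _ y hy hyv hyk => hts (hr _ hy hyv hyk)⟩
  choose R hR using htrap
  obtain ⟨g, hg⟩ := exists_forall_eventually_le fun c n => prefixBound R c (n + 1)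
  refine ⟨g, fun y f hf hyf => ?_⟩
  obtain ⟨m, hm⟩ := eventually_atTop.1 (eventually_true_of_mem_Fr (φ y).2)
  -- Past `m`, `φ y` contains `f (k - 1) = maxFin (extendTop k (f↾k))`, so `y` escapes the trap.
  have hstep : ∀ k, f k ≤ f m ∨ f k ≤ R k fun i => f i := by
    intro k
    by_cases hkm : k ≤ m
    · exact Or.inl (hf.monotone hkm)
    refine Or.inr (not_lt.1 fun hlt => ?_)
    have hfalse := hR k (fun i => f i) (fun i j hij => hf.monotone hij) y
      (hyf ▸ Nat.mono_cast.comp hf.monotone) (fun i => by simp [hyf, toInc])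
      (by simpa [hyf, toInc] using hlt)
    rw [maxFin_extendTop (fun i j hij => hf.monotone hij) (by omega),
      hm _ ((show m ≤ k - 1 by omega).trans hf.le_apply)] at hfalse
    exact Bool.noConfusion hfalse
  filter_upwards [hg (f m)] with n hn
  exact (le_prefixBound hstep (n + 1) n n.lt_succ_self).trans hn

lemma IsBScale.lt_of_not_eventually_le {b : {o : Ordinal // o < bCard.ord} → (ℕ → ℕ)}
    (hb : IsBScale b) {g : ℕ → ℕ} {α β : {o : Ordinal // o < bCard.ord}}
    (hβ : ¬ ∀ᶠ n in atTop, b β n ≤ g n) (hα : ∀ᶠ n in atTop, b α n ≤ g n) : α < β := by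
  by_contra! h
  rcases h.eq_or_lt with rfl | h
  · exact hβ hα
  · exact hβ ((hb.mono β α h).and hα |>.mono fun n hn => hn.1.trans hn.2)

lemma mk_subtype_lt_bCard_ord :
    Cardinal.mk {o : Ordinal // o < bCard.ord} = Cardinal.lift.{1} bCard := by
  have := Cardinal.mk_Iio_ordinal bCard.ord
  rwa [Cardinal.card_ord] at this

lemma mk_Iio_lt_lift_bCard (β : {o : Ordinal // o < bCard.ord}) :
    Cardinal.mk (Iio β) < Cardinal.lift.{1} bCard := by
  calc Cardinal.mk (Iio β) ≤ Cardinal.mk (Iio β.1) :=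
        Cardinal.mk_le_of_injective (f := fun a => ⟨a.1.1, a.2⟩) fun a a' h => by
          ext
          simpa using congrArg Subtype.val h
    _ = Cardinal.lift.{1} β.1.card := Cardinal.mk_Iio_ordinal _
    _ < Cardinal.lift.{1} bCard := Cardinal.lift_lt.2 (Cardinal.lt_ord.1 β.2)

lemma lift_mk_image_union_Qset_le {ι : Type 1} (F : ι → ℕ → ℕ∞) (s : Set ι) :
    Cardinal.lift.{1} (Cardinal.mk ↥(F '' s ∪ Qset)) ≤ Cardinal.mk s + Cardinal.aleph0 := by
  calc _ ≤ Cardinal.lift.{1} (Cardinal.mk ↥(F '' s) + Cardinal.mk ↥Qset) :=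
        Cardinal.lift_le.2 (Cardinal.mk_union_le _ _)
    _ ≤ _ := by
      rw [Cardinal.lift_add]
      gcongr
      · simpa using Cardinal.mk_image_le_lift (f := F) (s := s)
      · exact Cardinal.lift_le_aleph0.2 (Cardinal.mk_le_aleph0_iff.2 countable_Qset.to_subtype)

lemma mk_lt_bCard_of_subset {F : {o : Ordinal // o < bCard.ord} → ℕ → ℕ∞}
    (β : {o : Ordinal // o < bCard.ord}) {S : Set (ℕ → ℕ∞)} (hS : S ⊆ F '' Iio β ∪ Qset) :
    Cardinal.mk S < bCard := by
  rw [← Cardinal.lift_lt.{0, 1}]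
  have hℵ₀ : Cardinal.aleph0 ≤ Cardinal.lift.{1} bCard := by
    simpa using aleph0_lt_bCard.le
  calc Cardinal.lift.{1} (Cardinal.mk S) ≤ Cardinal.lift.{1} (Cardinal.mk ↥(F '' Iio β ∪ Qset)) :=
        Cardinal.lift_le.2 (Cardinal.mk_le_mk_of_subset hS)
    _ ≤ Cardinal.mk (Iio β) + Cardinal.aleph0 := lift_mk_image_union_Qset_le F _
    _ < Cardinal.lift.{1} bCard :=
        Cardinal.add_lt_of_lt hℵ₀ (mk_Iio_lt_lift_bCard β) (by simpa using aleph0_lt_bCard)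

lemma mk_range_union_Qset {b : {o : Ordinal // o < bCard.ord} → (ℕ → ℕ)} (hb : IsBScale b) :
    Cardinal.mk ↥(toInc '' range b ∪ Qset) = bCard := by
  have hℵ₀ : Cardinal.aleph0 ≤ Cardinal.lift.{1} bCard := by
    simpa using aleph0_lt_bCard.le
  rw [← Cardinal.lift_inj.{_, 1}]
  refine le_antisymm ?_ ?_
  · calc _ ≤ Cardinal.mk (univ : Set {o : Ordinal // o < bCard.ord}) + Cardinal.aleph0 := by
          simpa [← image_univ, image_image] using
            lift_mk_image_union_Qset_le (fun a => toInc (b a)) univ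
      _ = Cardinal.lift.{1} bCard := by
          rw [Cardinal.mk_univ, mk_subtype_lt_bCard_ord, Cardinal.add_eq_left hℵ₀ hℵ₀]
  · have := Cardinal.lift_mk_le_lift_mk_of_injective
      (f := fun a => (⟨toInc (b a), Or.inl (mem_image_of_mem _ (mem_range_self a))⟩ :
        ↥(toInc '' range b ∪ Qset)))
      fun a a' h => hb.inj (toInc_injective (congrArg Subtype.val h))
    rwa [Cardinal.lift_uzero, mk_subtype_lt_bCard_ord] at this

/-- Theorem: for `X = B ∪ Q`, `B` a 𝔟-scale, there is a clopen-valued lsc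
`Φ : X ⇒ Fr` with `Φ(x) = Fr` for all `x ∈ B`, and such that every continuous partial
selection of `Φ` defined on a subset `Y ⊇ Q` of `X` satisfies `|Y| < |X| = 𝔟`. -/
theorem exists_lsc_without_large_partial_selections
    (b : {o : Ordinal // o < bCard.ord} → (ℕ → ℕ)) (hb : IsBScale b)
    (X : Set (ℕ → ℕ∞)) (hX : X = toInc '' Set.range b ∪ Qset) :
    Cardinal.mk ↥X = bCard ∧
    ∃ Φ : ↥X → Set ↥Fr, LSC Φ ∧ (∀ x, IsClopen (Φ x) ∧ (Φ x).Nonempty) ∧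
      (∀ x : ↥X, (x : ℕ → ℕ∞) ∈ toInc '' Set.range b → Φ x = Set.univ) ∧
      (∀ Y : Set ↥X, (∀ x : ↥X, (x : ℕ → ℕ∞) ∈ Qset → x ∈ Y) →
        ∀ φ : ↥Y → ↥Fr, Continuous φ → (∀ y : ↥Y, φ y ∈ Φ (y : ↥X)) →
          Cardinal.mk ↥Y < Cardinal.mk ↥X) := by
  subst hX
  have hcard := mk_range_union_Qset hb
  refine ⟨hcard, fun x => omitMax x, lsc_omitMax ?_,
    fun x => ⟨isClopen_omitMax x, omitMax_nonempty x⟩, ?_, ?_⟩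
  · rintro x (⟨_, ⟨α, rfl⟩, rfl⟩ | hx)
    exacts [Or.inr ⟨b α, hb.strictMono α, rfl⟩, Or.inl hx]
  · rintro x ⟨f, -, hf⟩
    exact omitMax_of_notMem (hf ▸ toInc_notMem_Qset f)
  intro Y hY φ hφ hsel
  obtain ⟨g, hg⟩ := exists_eventually_le_of_continuous_selection
    (IsInducing.subtypeVal.comp IsInducing.subtypeVal)
    (fun q hq => ⟨⟨_, hY ⟨q, Or.inr hq⟩ hq⟩, rfl⟩) hφ hsel
  obtain ⟨β, hβ⟩ := hb.unbounded g
  rw [hcard, ← Cardinal.mk_range_eq _ (Subtype.val_injective.comp Subtype.val_injective)]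
  refine mk_lt_bCard_of_subset (F := fun α => toInc (b α)) β ?_
  rintro _ ⟨y, rfl⟩
  rcases (y : ↥(toInc '' range b ∪ Qset)).2 with ⟨_, ⟨α, rfl⟩, hα⟩ | hQ
  · exact Or.inl ⟨α, hb.lt_of_not_eventually_le hβ (hg y _ (hb.strictMono α) hα.symm), hα⟩
  · exact Or.inr hQ
end

section
/- Let X be a topological space in which any two disjoint closed subsets can be separated by a clopen set. If X is a σ-space, then X does not satisfy property (θ). -/
open Set Filter Topology

attribute [local instance] Classical.propDecidable

/-- Any two disjoint closed sets can be separated by a clopen set. -/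
def ClopenSep (X : Type*) [TopologicalSpace X] : Prop :=
  ∀ F G : Set X, IsClosed F → IsClosed G → Disjoint F G →
    ∃ C : Set X, IsClopen C ∧ F ⊆ C ∧ Disjoint G C

/-- `X` is a σ-space: every F_σ subset is a G_δ subset. -/
def IsSigmaSpace (X : Type*) [TopologicalSpace X] : Prop :=
  ∀ A : Set X, (∃ F : ℕ → Set X, (∀ n, IsClosed (F n)) ∧ A = ⋃ n, F n) →
    ∃ G : ℕ → Set X, (∀ n, IsOpen (G n)) ∧ A = ⋂ n, G n

/-- Property (θ): there are an injectively enumerated open γ-cover `U` of `X` and a countable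
`D ⊆ X` such that every clopen refinement of `U` which is a γ-cover of some `Y ⊇ D`
forces `|Y| < |X|`. -/
def PropTheta (X : Type u) [TopologicalSpace X] : Prop :=
  ∃ U : ℕ → Set X, Function.Injective U ∧ (∀ n, IsOpen (U n)) ∧
    (∀ x : X, ∀ᶠ n in atTop, x ∈ U n) ∧
    ∃ D : Set X, D.Countable ∧
      ∀ V : ℕ → Set X, (∀ n, IsClopen (V n)) → (∀ n, V n ⊆ U n) →
        ∀ Y : Set X, D ⊆ Y → (∀ y ∈ Y, ∀ᶠ n in atTop, y ∈ V n) →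
          Cardinal.mk ↥Y < Cardinal.mk X

/-- No σ-space (with clopen separation of disjoint closed sets) satisfies property (θ). -/
theorem sigmaSpace_not_theta (X : Type*) [TopologicalSpace X] (hX : ClopenSep X)
    (hσ : IsSigmaSpace X) : ¬ PropTheta X := by
  rintro ⟨U, -, hUopen, hUgam, D, -, hkey⟩
  -- the "tails" of the γ-cover
  set Q : ℕ → Set X := fun n => ⋂ m, ⋂ _ : n ≤ m, U m with hQdef
  have hQmono : Monotone Q := by
    intro a b hab
    exact iInter₂_mono' fun m hm => ⟨m, hab.trans hm, subset_rfl⟩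
  have hQsub : ∀ n, Q n ⊆ U n := fun n => iInter₂_subset n le_rfl
  -- each `Q n` is F_σ, by the σ-space property applied to its complement
  have hK : ∀ n, ∃ K : ℕ → Set X, (∀ k, IsClosed (K k)) ∧ Q n = ⋃ k, K k := by
    intro n
    have hcompl : (Q n)ᶜ = ⋃ i, (U (n + i))ᶜ := by
      ext x
      simp only [hQdef, mem_compl_iff, mem_iInter, mem_iUnion, not_forall]
      constructor
      · rintro ⟨m, hm, hx⟩
        exact ⟨m - n, by rwa [Nat.add_sub_cancel' hm]⟩
      · rintro ⟨i, hx⟩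
        exact ⟨n + i, Nat.le_add_right n i, hx⟩
    obtain ⟨G, hGopen, hGeq⟩ := hσ (Q n)ᶜ
      ⟨fun i => (U (n + i))ᶜ, fun i => (hUopen (n + i)).isClosed_compl, hcompl⟩
    refine ⟨fun k => (G k)ᶜ, fun k => (hGopen k).isClosed_compl, ?_⟩
    rw [← compl_compl (Q n), hGeq, compl_iInter]
  choose K hKclosed hKeq using hK
  -- increasing closed sets covering X, with `E n ⊆ Q n`
  set E : ℕ → Set X := fun j =>
    ⋃ n ∈ Finset.range (j + 1), ⋃ k ∈ Finset.range (j + 1), K n k with hEdef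
  have hEclosed : ∀ j, IsClosed (E j) := by
    intro j
    refine (Finset.range (j + 1)).finite_toSet.isClosed_biUnion fun n _ => ?_
    exact (Finset.range (j + 1)).finite_toSet.isClosed_biUnion fun k _ => hKclosed n k
  have hEmono : Monotone E := by
    intro a b hab
    refine iUnion₂_mono' fun n hn => ⟨n, ?_, iUnion₂_mono' fun k hk => ⟨k, ?_, subset_rfl⟩⟩
    · exact Finset.mem_range.2 ((Finset.mem_range.1 hn).trans_le (by omega))
    · exact Finset.mem_range.2 ((Finset.mem_range.1 hk).trans_le (by omega))
  have hEsub : ∀ j, E j ⊆ Q j := by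
    intro j x hx
    simp only [hEdef, mem_iUnion, Finset.mem_range] at hx
    obtain ⟨n, hn, k, -, hx⟩ := hx
    have : x ∈ Q n := by rw [hKeq n]; exact mem_iUnion.2 ⟨k, hx⟩
    exact hQmono (by omega) this
  have hEcover : ∀ x : X, ∃ j, x ∈ E j := by
    intro x
    obtain ⟨N, hN⟩ := eventually_atTop.1 (hUgam x)
    have hxQ : x ∈ Q N := by
      simp only [hQdef, mem_iInter]
      exact fun m hm => hN m hm
    rw [hKeq N, mem_iUnion] at hxQ
    obtain ⟨k, hk⟩ := hxQ
    refine ⟨max N k, ?_⟩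
    simp only [hEdef, mem_iUnion, Finset.mem_range]
    exact ⟨N, by omega, k, by omega, hk⟩
  -- clopen separation of `E n` from `(U n)ᶜ`
  have hV : ∀ n, ∃ V : Set X, IsClopen V ∧ E n ⊆ V ∧ V ⊆ U n := by
    intro n
    have hdisj : Disjoint (E n) (U n)ᶜ :=
      disjoint_compl_right_iff_subset.2 ((hEsub n).trans (hQsub n))
    obtain ⟨V, hVclopen, hEV, hVdisj⟩ :=
      hX (E n) (U n)ᶜ (hEclosed n) (hUopen n).isClosed_compl hdisj
    exact ⟨V, hVclopen, hEV, by
      intro x hx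
      by_contra h
      exact hVdisj.ne_of_mem h hx rfl⟩
  choose V hVclopen hEV hVsub using hV
  -- apply (θ) to `Y = univ`
  have hcover : ∀ y ∈ (univ : Set X), ∀ᶠ n in atTop, y ∈ V n := by
    intro y _hy
    obtain ⟨j, hj⟩ := hEcover y
    exact eventually_atTop.2 ⟨j, fun n hn => hEV n (hEmono hn hj)⟩
  have := hkey V hVclopen hVsub univ (subset_univ D) hcover
  rw [Cardinal.mk_univ] at this
  exact lt_irrefl _ this
end

section
/- The topological sum X = ℝ ⊕ (ℝ∖ℚ) (the disjoint union of ℝ and the irrationals, each with its usual topology) satisfies property (θ), but does not satisfy S_fin(O,O). -/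
/-!
Property (θ) comes from the connectedness of the real summand: with `Uₙ = X ∖ {n}`, a clopen
`Vₙ ⊆ Uₙ` misses the connected set `ℝ`, so `0` lies in no `Vₙ` and no `Y ∋ 0` is γ-covered.

The Menger property fails on the irrational summand. Iterating the partition of `(a, b]` into the
pieces `(a + (b - a)/(m + 2), a + (b - a)/(m + 1)]` assigns to each irrational of `(0, 1)` a digit
sequence in `ℕ^ℕ`, as continued fractions do, and the open sets "digit `k` is at most `n`" form
increasing covers. Given bounds `M`, nested closed cells with digit `k` above `M k` that avoid the
`k`-th rational meet in an irrational escaping every finite subcover.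
-/

open Set Filter Topology

attribute [local instance] Classical.propDecidable

/-- The Menger property S_fin(O,O). -/
def Menger (X : Type u) [TopologicalSpace X] : Prop :=
  ∀ U : ℕ → Set (Set X), (∀ k, (∀ V ∈ U k, IsOpen V) ∧ ⋃₀ U k = Set.univ) →
    ∃ F : ℕ → Set (Set X), (∀ k, F k ⊆ U k ∧ (F k).Finite) ∧ ⋃₀ (⋃ k, F k) = Set.univ

def subinterval {𝕜 : Type*} [DivisionRing 𝕜] (I : 𝕜 × 𝕜) (m : ℕ) : 𝕜 × 𝕜 :=
  (I.1 + (I.2 - I.1) / (m + 2), I.1 + (I.2 - I.1) / (m + 1))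

section Subinterval

variable {𝕜 : Type*} [Field 𝕜] [LinearOrder 𝕜] [IsStrictOrderedRing 𝕜]

variable {I : 𝕜 × 𝕜}

theorem fst_lt_subinterval_fst (hI : I.1 < I.2) (m : ℕ) : I.1 < (subinterval I m).1 :=
  lt_add_of_pos_right _ (div_pos (sub_pos.2 hI) (by positivity))

theorem subinterval_fst_lt_snd (hI : I.1 < I.2) (m : ℕ) :
    (subinterval I m).1 < (subinterval I m).2 := by
  have : ((m : 𝕜) + 1) < m + 2 := by linarith
  exact add_lt_add_right (div_lt_div_of_pos_left (sub_pos.2 hI) (by positivity) this) _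

theorem subinterval_snd_le_snd (hI : I.1 < I.2) (m : ℕ) : (subinterval I m).2 ≤ I.2 := by
  have := div_le_self (sub_pos.2 hI).le (by norm_cast; omega : (1 : 𝕜) ≤ m + 1)
  simp only [subinterval]
  linarith

theorem subinterval_snd_le_fst (hI : I.1 < I.2) {m m' : ℕ} (h : m < m') :
    (subinterval I m').2 ≤ (subinterval I m).1 := by
  have : (m : 𝕜) + 2 ≤ m' + 1 := by norm_cast; omega
  exact add_le_add_right (div_le_div_of_nonneg_left (sub_pos.2 hI).le (by positivity) this) _

theorem exists_mem_subinterval [FloorSemiring 𝕜] {x : 𝕜} (hx : x ∈ Ioo I.1 I.2)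
    (hne : ∀ m : ℕ, x ≠ (subinterval I m).2) :
    ∃ m : ℕ, x ∈ Ioo (subinterval I m).1 (subinterval I m).2 := by
  obtain ⟨hax, hxb⟩ := hx
  have hxa : 0 < x - I.1 := sub_pos.2 hax
  set r := (I.2 - I.1) / (x - I.1)
  have hr : 1 < r := (one_lt_div hxa).2 (by linarith)
  have hfloor : 1 ≤ ⌊r⌋₊ := Nat.le_floor (by exact_mod_cast hr.le)
  have hpos : (0 : 𝕜) < ⌊r⌋₊ := by exact_mod_cast hfloor
  refine ⟨⌊r⌋₊ - 1, ?_, lt_of_le_of_ne ?_ (hne _)⟩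
  all_goals simp only [subinterval, Nat.cast_sub hfloor, Nat.cast_one, sub_add_cancel]
  · have := (div_lt_iff₀ hxa).1 (Nat.lt_floor_add_one r)
    rw [show (⌊r⌋₊ : 𝕜) - 1 + 2 = ⌊r⌋₊ + 1 by ring, ← lt_sub_iff_add_lt',
      div_lt_iff₀ (by positivity)]
    linarith
  · have := (le_div_iff₀ hxa).1 (Nat.floor_le (zero_le_one.trans hr.le))
    rw [← sub_le_iff_le_add', le_div_iff₀ hpos]
    linarith

end Subinterval

theorem Rat.cast_subinterval (I : ℚ × ℚ) (m : ℕ) :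
    Prod.map ((↑) : ℚ → ℝ) (↑) (subinterval I m) = subinterval (Prod.map (↑) (↑) I) m := by
  simp [subinterval]

-- The head of a list is the most recently chosen digit, so `m :: l` refines `l`.
def cellEnds : List ℕ → ℚ × ℚ
  | [] => (0, 1)
  | m :: l => subinterval (cellEnds l) m

def cell (l : List ℕ) : Set ℝ := Ioo ((cellEnds l).1 : ℝ) (cellEnds l).2

def closedCell (l : List ℕ) : Set ℝ := Icc ((cellEnds l).1 : ℝ) (cellEnds l).2

theorem cellEnds_fst_lt_snd : ∀ l : List ℕ, (cellEnds l).1 < (cellEnds l).2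
  | [] => zero_lt_one
  | m :: l => subinterval_fst_lt_snd (cellEnds_fst_lt_snd l) m

theorem cell_cons_subset (m : ℕ) (l : List ℕ) : cell (m :: l) ⊆ cell l := by
  have h := cellEnds_fst_lt_snd l
  apply Ioo_subset_Ioo
  · exact_mod_cast (fst_lt_subinterval_fst h m).le
  · exact_mod_cast subinterval_snd_le_snd h m

theorem closedCell_cons_subset (m : ℕ) (l : List ℕ) : closedCell (m :: l) ⊆ closedCell l := by
  have h := cellEnds_fst_lt_snd l
  apply Icc_subset_Icc
  · exact_mod_cast (fst_lt_subinterval_fst h m).le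
  · exact_mod_cast subinterval_snd_le_snd h m

theorem Irrational.mem_cell_of_mem_closedCell {x : ℝ} (hx : Irrational x) {l : List ℕ}
    (h : x ∈ closedCell l) : x ∈ cell l :=
  ⟨h.1.lt_of_ne (hx.ne_rat _).symm, h.2.lt_of_ne (hx.ne_rat _)⟩

theorem disjoint_cell : ∀ {l l' : List ℕ}, l.length = l'.length → l ≠ l' →
    Disjoint (cell l) (cell l')
  | [], [], _, hne => absurd rfl hne
  | m :: l, m' :: l', hlen, hne => by
    by_cases hl : l = l'
    · subst hl
      have hm : m ≠ m' := fun h => hne (h ▸ rfl)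
      have h := cellEnds_fst_lt_snd l
      rw [cell, cell, Ioo_disjoint_Ioo]
      rcases hm.lt_or_gt with hm | hm
      · exact (min_le_right _ _).trans <| le_trans (by exact_mod_cast subinterval_snd_le_fst h hm)
          (le_max_left _ _)
      · exact (min_le_left _ _).trans <| le_trans (by exact_mod_cast subinterval_snd_le_fst h hm)
          (le_max_right _ _)
    · exact (disjoint_cell (by simpa using hlen) hl).mono (cell_cons_subset m l)
        (cell_cons_subset m' l')

theorem Irrational.exists_cons_mem_cell {x : ℝ} (hx : Irrational x) {l : List ℕ}
    (h : x ∈ cell l) : ∃ m, x ∈ cell (m :: l) := by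
  have hne (m : ℕ) : x ≠ (subinterval (Prod.map ((↑) : ℚ → ℝ) (↑) (cellEnds l)) m).2 := by
    rw [← Rat.cast_subinterval]
    exact hx.ne_rat _
  obtain ⟨m, hm⟩ := exists_mem_subinterval h hne
  rw [← Rat.cast_subinterval] at hm
  exact ⟨m, hm⟩

theorem Irrational.exists_mem_cell {x : ℝ} (hx : Irrational x) (h : x ∈ Ioo 0 1) :
    ∀ k, ∃ l : List ℕ, l.length = k ∧ x ∈ cell l
  | 0 => ⟨[], rfl, by simpa [cell, cellEnds] using h⟩
  | k + 1 => by
    obtain ⟨l, rfl, hl⟩ := hx.exists_mem_cell h k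
    obtain ⟨m, hm⟩ := hx.exists_cons_mem_cell hl
    exact ⟨m :: l, rfl, hm⟩

def digitLE (k n : ℕ) : Set ℝ :=
  (Icc 0 1)ᶜ ∪ ⋃ (l : List ℕ) (_ : l.length = k) (m ≤ n), cell (m :: l)

theorem isOpen_digitLE (k n : ℕ) : IsOpen (digitLE k n) :=
  isClosed_Icc.isOpen_compl.union <| isOpen_biUnion fun _ _ => isOpen_biUnion fun _ _ => isOpen_Ioo

theorem digitLE_mono (k : ℕ) : Monotone (digitLE k) := fun _ _ hn =>
  union_subset_union_right _ <| biUnion_mono subset_rfl fun _ _ =>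
    biUnion_subset_biUnion_left fun _ hm => le_trans hm hn

theorem Irrational.exists_mem_digitLE {x : ℝ} (hx : Irrational x) (k : ℕ) :
    ∃ n, x ∈ digitLE k n := by
  by_cases h : x ∈ Ioo 0 1
  · obtain ⟨l, hlen, hl⟩ := hx.exists_mem_cell h (k + 1)
    obtain ⟨m, l, rfl⟩ : ∃ m l', l = m :: l' := List.exists_cons_of_length_eq_add_one hlen
    simp only [digitLE, mem_union, mem_iUnion]
    exact ⟨m, Or.inr ⟨l, by simpa using hlen, m, le_rfl, hl⟩⟩
  · refine ⟨0, Or.inl fun h01 => h ⟨h01.1.lt_of_ne ?_, h01.2.lt_of_ne ?_⟩⟩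
    · exact_mod_cast (hx.ne_rat 0).symm
    · exact_mod_cast hx.ne_rat 1

section AvoidingBranch

-- Closed cells of adjacent digits share an endpoint; those of digits `n + 1` and `n + 3` do not.
def avoidingDigit (r : ℚ) (n : ℕ) (l : List ℕ) : ℕ :=
  if r ∈ Icc (cellEnds ((n + 1) :: l)).1 (cellEnds ((n + 1) :: l)).2 then n + 3 else n + 1

theorem lt_avoidingDigit (r : ℚ) (n : ℕ) (l : List ℕ) : n < avoidingDigit r n l := by
  unfold avoidingDigit; split <;> omega

theorem not_mem_closedCell_avoidingDigit (r : ℚ) (n : ℕ) (l : List ℕ) :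
    (r : ℝ) ∉ closedCell (avoidingDigit r n l :: l) := by
  unfold avoidingDigit
  split_ifs with hr
  · have h := cellEnds_fst_lt_snd l
    have : (cellEnds ((n + 3) :: l)).2 < (cellEnds ((n + 1) :: l)).1 :=
      (subinterval_snd_le_fst h (by omega : n + 2 < n + 3)).trans_lt <|
        (subinterval_fst_lt_snd h _).trans_le (subinterval_snd_le_fst h (by omega))
    exact fun hmem => (hr.1.trans_lt' this).not_ge (by exact_mod_cast hmem.2)
  · exact fun hmem => hr ⟨by exact_mod_cast hmem.1, by exact_mod_cast hmem.2⟩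

variable (q : ℕ → ℚ) (M : ℕ → ℕ)

def avoidingBranch : ℕ → List ℕ
  | 0 => []
  | k + 1 => avoidingDigit (q k) (M k) (avoidingBranch k) :: avoidingBranch k

theorem length_avoidingBranch : ∀ k, (avoidingBranch q M k).length = k
  | 0 => rfl
  | k + 1 => congrArg (· + 1) (length_avoidingBranch k)

theorem exists_forall_mem_closedCell_avoidingBranch :
    ∃ x, ∀ k, x ∈ closedCell (avoidingBranch q M k) := by
  have h := IsCompact.nonempty_iInter_of_sequence_nonempty_isCompact_isClosed
    (fun k => closedCell (avoidingBranch q M k)) (fun k => closedCell_cons_subset _ _)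
    (fun k => nonempty_Icc.2 (by exact_mod_cast (cellEnds_fst_lt_snd _).le))
    isCompact_Icc (fun _ => isClosed_Icc)
  simpa only [nonempty_def, mem_iInter] using h

end AvoidingBranch

theorem exists_irrational_forall_not_mem_digitLE (M : ℕ → ℕ) :
    ∃ x : ℝ, Irrational x ∧ ∀ k, x ∉ digitLE k (M k) := by
  obtain ⟨q, hq⟩ := exists_surjective_nat ℚ
  obtain ⟨x, hx⟩ := exists_forall_mem_closedCell_avoidingBranch q M
  have hirr : Irrational x := by
    rintro ⟨r, rfl⟩
    obtain ⟨k, rfl⟩ := hq r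
    exact not_mem_closedCell_avoidingDigit _ _ _ (hx (k + 1))
  refine ⟨x, hirr, fun k hk => ?_⟩
  rcases hk with h01 | hk
  · exact h01 (by simpa [closedCell, cellEnds, avoidingBranch] using hx 0)
  · simp only [mem_iUnion] at hk
    obtain ⟨l, hlen, m, hm, hxl⟩ := hk
    have heq : m :: l = avoidingBranch q M (k + 1) := by
      by_contra hne
      exact disjoint_left.1 (disjoint_cell (by simp [hlen, length_avoidingBranch]) hne) hxl
        (hirr.mem_cell_of_mem_closedCell (hx (k + 1)))
    have := lt_avoidingDigit (q k) (M k) (avoidingBranch q M k)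
    injection heq
    omega

theorem Menger.exists_forall_mem_of_monotone {X : Type*} [TopologicalSpace X] (hX : Menger X)
    (W : ℕ → ℕ → Set X) (hopen : ∀ k n, IsOpen (W k n)) (hmono : ∀ k, Monotone (W k))
    (hcover : ∀ k x, ∃ n, x ∈ W k n) : ∃ M : ℕ → ℕ, ∀ x, ∃ k, x ∈ W k (M k) := by
  obtain ⟨F, hF, hFcover⟩ := hX (fun k => range (W k)) fun k =>
    ⟨forall_mem_range.2 (hopen k), sUnion_range _ ▸ iUnion_eq_univ_iff.2 (hcover k)⟩
  have hbound (k : ℕ) : ∃ M, ∀ S ∈ F k, S ⊆ W k M := by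
    obtain ⟨N, -, hNfin, hN⟩ := exists_subset_image_finite_and.1
      ⟨F k, image_univ (f := W k) ▸ (hF k).1, (hF k).2, rfl⟩
    obtain ⟨M, hM⟩ := hNfin.bddAbove
    refine ⟨M, ?_⟩
    rw [hN]
    rintro _ ⟨n, hn, rfl⟩
    exact hmono k (hM hn)
  choose M hM using hbound
  refine ⟨M, fun x => ?_⟩
  obtain ⟨S, hS, hxS⟩ := hFcover.symm ▸ mem_univ x
  obtain ⟨k, hk⟩ := mem_iUnion.1 hS
  exact ⟨k, hM k S hk hxS⟩

theorem not_menger_sum_irrational (X : Type*) [TopologicalSpace X] :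
    ¬ Menger (X ⊕ {x : ℝ | Irrational x}) := by
  intro hMenger
  let W (k n : ℕ) : Set (X ⊕ {x : ℝ | Irrational x}) :=
    range Sum.inl ∪ Sum.inr '' (Subtype.val ⁻¹' digitLE k n)
  obtain ⟨M, hM⟩ := hMenger.exists_forall_mem_of_monotone W
    (fun k n => isOpen_range_inl.union <|
      isOpenMap_inr _ <| (isOpen_digitLE k n).preimage continuous_subtype_val)
    (fun k _ _ h => union_subset_union_right _ <| image_mono <| preimage_mono <| digitLE_mono k h)
    (fun k z => match z with
      | .inl a => ⟨0, Or.inl (mem_range_self a)⟩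
      | .inr y => (y.2.exists_mem_digitLE k).imp fun _ hn => Or.inr (mem_image_of_mem _ hn))
  obtain ⟨x, hx, hxM⟩ := exists_irrational_forall_not_mem_digitLE M
  obtain ⟨k, ⟨a, ha⟩ | ⟨y, hy, hyx⟩⟩ := hM (Sum.inr ⟨x, hx⟩)
  · exact Sum.inl_ne_inr ha
  · cases hyx
    exact hxM k hy

theorem propTheta_of_isPreconnected {X : Type*} [TopologicalSpace X] [T1Space X] {S : Set X}
    (hS : IsPreconnected S) (hinf : S.Infinite) : PropTheta X := by
  set s : ℕ → X := fun n => hinf.natEmbedding S n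
  have hs : Function.Injective s := Subtype.val_injective.comp (hinf.natEmbedding S).injective
  refine ⟨fun n => {s n}ᶜ, fun a b h => hs (singleton_injective (compl_injective h)),
    fun n => isOpen_compl_singleton, fun x => ?_, {s 0}, countable_singleton _, ?_⟩
  · rw [← Nat.cofinite_eq_atTop]
    exact (hs.tendsto_cofinite.eventually (eventually_cofinite_ne x)).mono fun n => Ne.symm
  intro V hV hVU Y hDY hY
  obtain ⟨n, hn⟩ := (hY (s 0) (hDY rfl)).exists
  have hSV : S ⊆ V n := hS.subset_isClopen (hV n) ⟨s 0, (hinf.natEmbedding S 0).2, hn⟩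
  exact absurd rfl (hVU n (hSV (hinf.natEmbedding S n).2))

/-- The topological sum `ℝ ⊕ (ℝ∖ℚ)` satisfies (θ) but not S_fin(O,O). -/
theorem real_sum_irrational_theta_not_menger :
    PropTheta (ℝ ⊕ ↥{x : ℝ | Irrational x}) ∧ ¬ Menger (ℝ ⊕ ↥{x : ℝ | Irrational x}) :=
  ⟨propTheta_of_isPreconnected (isPreconnected_range continuous_inl)
    (infinite_range_of_injective Sum.inl_injective), not_menger_sum_irrational ℝ⟩
end

section
/- Let X be a topological space. Then X satisfies S₁(C_Γ,C_Γ) if and only if for every continuous function φ : X → Fr^ℕ (where Fr^ℕ carries the product topology) there exists f ∈ ℕ^ℕ such that for every x ∈ X, f(k) ∈ φ(x)(k) for all but finitely many k. -/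
open Set Filter Topology

attribute [local instance] Classical.propDecidable

/-- S₁(C_Γ,C_Γ), γ-covers taken in the indexed sense. -/
def S1ClopenGammaGamma (X : Type*) [TopologicalSpace X] : Prop :=
  ∀ U : ℕ → ℕ → Set X, (∀ k n, IsClopen (U k n)) →
    (∀ k, ∀ x : X, ∀ᶠ n in atTop, x ∈ U k n) →
    ∃ f : ℕ → ℕ, ∀ x : X, ∀ᶠ k in atTop, x ∈ U k (f k)

lemma indicator_continuous {X : Type*} [TopologicalSpace X] {s : Set X} (hs : IsClopen s) :
    Continuous (fun x => decide (x ∈ s)) := by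
  rw [continuous_def]
  intro t _
  have : (fun x => decide (x ∈ s)) ⁻¹' t =
      (if true ∈ t then s else ∅) ∪ (if false ∈ t then sᶜ else ∅) := by
    ext x
    by_cases hx : x ∈ s <;> simp [hx]
  rw [this]
  apply IsOpen.union <;> split
  · exact hs.isOpen
  · exact isOpen_empty
  · exact hs.compl.isOpen
  · exact isOpen_empty

/-- Theorem: `X` satisfies S₁(C_Γ,C_Γ) iff for every continuous `φ : X → Fr^ℕ` there is
`f ∈ ℕ^ℕ` with `f(k) ∈ φ(x)(k)` for every `x` and all but finitely many `k`. -/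
theorem s1ClopenGammaGamma_iff (X : Type*) [TopologicalSpace X] :
    S1ClopenGammaGamma X ↔
      ∀ φ : X → (ℕ → ↥Fr), Continuous φ →
        ∃ f : ℕ → ℕ, ∀ x : X, ∀ᶠ k in atTop, (φ x k : PN) (f k) = true := by
  constructor
  · intro hS φ hφ
    set U : ℕ → ℕ → Set X := fun k n => (fun x => (φ x k : PN) n) ⁻¹' {true} with hU
    have hc : ∀ k n, Continuous fun x => (φ x k : PN) n := fun k n =>
      (continuous_apply n).comp (continuous_subtype_val.comp ((continuous_apply k).comp hφ))
    have hclopen : ∀ k n, IsClopen (U k n) := fun k n =>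
      (isClopen_discrete {true}).preimage (hc k n)
    have hγ : ∀ k, ∀ x : X, ∀ᶠ n in atTop, x ∈ U k n := by
      intro k x
      have hfin : {n : ℕ | (φ x k : PN) n = false}.Finite := (φ x k).2
      rw [← Nat.cofinite_eq_atTop]
      rw [eventually_cofinite]
      convert hfin using 1
      ext n
      simp [hU, Set.mem_preimage]
    obtain ⟨f, hf⟩ := hS U hclopen hγ
    exact ⟨f, fun x => (hf x).mono fun k hk => hk⟩
  · intro h U hclopen hγ
    have hfin : ∀ x k, {n : ℕ | decide (x ∈ U k n) = false}.Finite := by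
      intro x k
      have := (hγ k x)
      rw [← Nat.cofinite_eq_atTop, eventually_cofinite] at this
      convert this using 1
      ext n
      simp
    set φ : X → (ℕ → ↥Fr) := fun x k => ⟨fun n => decide (x ∈ U k n), hfin x k⟩ with hφdef
    have hφ : Continuous φ := by
      apply continuous_pi
      intro k
      apply Continuous.subtype_mk
      apply continuous_pi
      intro n
      exact indicator_continuous (hclopen k n)
    obtain ⟨f, hf⟩ := h φ hφ
    refine ⟨f, fun x => (hf x).mono fun k hk => ?_⟩
    simpa [hφdef] using hk
end

section
/- Let X be a topological space. Then X satisfies S₁(Γ,Γ) if and only if for every function φ : X → Fr^ℕ such that the multivalued map Φ : X ⇒ Fr^ℕ defined by Φ(x) = ∏_{k∈ℕ} (P(φ(x)(k)) ∩ Fr) = {A ∈ Fr^ℕ : A(k) ⊆ φ(x)(k) for all k} is lower semicontinuous (Fr^ℕ with the product topology), there exists f ∈ ℕ^ℕ such that for every x ∈ X, f(k) ∈ φ(x)(k) for all but finitely many k. -/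
open Set Filter Topology

attribute [local instance] Classical.propDecidable

/-- S₁(Γ,Γ), γ-covers taken in the indexed sense. -/
def S1GammaGamma (X : Type*) [TopologicalSpace X] : Prop :=
  ∀ U : ℕ → ℕ → Set X, (∀ k n, IsOpen (U k n)) →
    (∀ k, ∀ x : X, ∀ᶠ n in atTop, x ∈ U k n) →
    ∃ f : ℕ → ℕ, ∀ x : X, ∀ᶠ k in atTop, x ∈ U k (f k)

/-!
A sequence of γ-covers `U k n` and a map `φ : X → Fr^ℕ` are the same data via
`φ x k = {n | x ∈ U k n}`: cofiniteness of `φ x k` is the γ-cover property, and lower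
semicontinuity of `Φ` is openness of the `U k n`. Indeed, since `φ x` is the largest element of
`Φ x`, the set `{x | n ∈ φ x k}` is the one that lsc makes open for the basic open `{A | n ∈ A k}`.
Conversely, for `A ∈ Φ x₀` the selection `x ↦ A ∩ φ x` of `Φ` is continuous at `x₀`: each of its
coordinates is either constantly `false` or `true` on an open set `U k n ∋ x₀`.
-/

theorem LSC.of_continuousAt_selection {X Y : Type*} [TopologicalSpace X] [TopologicalSpace Y]
    {Φ : X → Set Y}
    (h : ∀ x₀, ∀ y ∈ Φ x₀, ∃ g : X → Y, ContinuousAt g x₀ ∧ g x₀ = y ∧ ∀ x, g x ∈ Φ x) :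
    LSC Φ := by
  intro V hV
  rw [isOpen_iff_mem_nhds]
  rintro x₀ ⟨y, hyΦ, hyV⟩
  obtain ⟨g, hg, rfl, hgΦ⟩ := h x₀ y hyΦ
  filter_upwards [hg (hV.mem_nhds hyV)] with x hx
  exact ⟨g x, hgΦ x, hx⟩

theorem mem_Fr_iff {A : PN} : A ∈ Fr ↔ ∀ᶠ n in atTop, A n = true := by
  simp [Fr, ← Nat.cofinite_eq_atTop, eventually_cofinite]

theorem and_mem_Fr {A B : PN} (hA : A ∈ Fr) (hB : B ∈ Fr) : (fun n => A n && B n) ∈ Fr := by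
  rw [mem_Fr_iff] at *
  filter_upwards [hA, hB] with n hAn hBn
  simp [hAn, hBn]

theorem isOpen_setOf_apply_apply_eq_true (k n : ℕ) :
    IsOpen {A : ℕ → ↥Fr | (A k : PN) n = true} :=
  have : Continuous fun A : ℕ → ↥Fr => (A k : PN) n :=
    ((continuous_apply n).comp continuous_subtype_val).comp (continuous_apply k)
  this.isOpen_preimage {true} (isOpen_discrete _)

/-- The set `∏ₖ (P(B k) ∩ Fr)`. -/
def frBelow (B : ℕ → ↥Fr) : Set (ℕ → ↥Fr) :=
  {A | ∀ k n, (A k : PN) n = true → (B k : PN) n = true}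

theorem isOpen_setOf_apply_eq_true_of_LSC {X : Type*} [TopologicalSpace X] {φ : X → ℕ → ↥Fr}
    (hφ : LSC fun x => frBelow (φ x)) (k n : ℕ) : IsOpen {x | (φ x k : PN) n = true} := by
  convert hφ _ (isOpen_setOf_apply_apply_eq_true k n) using 1
  ext x
  exact ⟨fun hx => ⟨φ x, fun _ _ h => h, hx⟩, fun ⟨_, hA, hAV⟩ => hA k n hAV⟩

section Indicator

variable {X : Type*} [TopologicalSpace X] {U : ℕ → ℕ → Set X}

noncomputable def coverIndicator (hU : ∀ k, ∀ x, ∀ᶠ n in atTop, x ∈ U k n) (x : X) (k : ℕ) : ↥Fr :=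
  ⟨fun n => decide (x ∈ U k n), mem_Fr_iff.2 <| by simpa using hU k x⟩

theorem LSC_frBelow_coverIndicator (hUo : ∀ k n, IsOpen (U k n))
    (hU : ∀ k, ∀ x, ∀ᶠ n in atTop, x ∈ U k n) :
    LSC fun x => frBelow (coverIndicator hU x) := by
  refine LSC.of_continuousAt_selection fun x₀ A hA => ?_
  have hAU : ∀ k n, (A k : PN) n = true → x₀ ∈ U k n := by
    simpa [frBelow, coverIndicator] using hA
  refine ⟨fun x k => ⟨_, and_mem_Fr (A k).2 (coverIndicator hU x k).2⟩, ?_, ?_, ?_⟩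
  · refine continuousAt_pi.2 fun k => IsInducing.subtypeVal.continuousAt_iff.2 <|
      continuousAt_pi.2 fun n => ?_
    rw [ContinuousAt, nhds_discrete Bool, tendsto_pure]
    cases hAkn : (A k : PN) n
    · simp [hAkn]
    · filter_upwards [(hUo k n).mem_nhds (hAU k n hAkn)] with x hx
      simp [coverIndicator, hx, hAU k n hAkn]
  · ext k n
    cases hAkn : (A k : PN) n <;> simp [coverIndicator, hAkn, hAU k n]
  · intro x k n
    simp +contextual [coverIndicator]

end Indicator

/-- Theorem: `X` satisfies S₁(Γ,Γ) iff for every `φ : X → Fr^ℕ` such that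
`Φ(x) = ∏ₖ (P(φ(x)(k)) ∩ Fr)` is lsc, there is `f ∈ ℕ^ℕ` with `f(k) ∈ φ(x)(k)` for every
`x` and all but finitely many `k`. -/
theorem s1GammaGamma_iff (X : Type*) [TopologicalSpace X] :
    S1GammaGamma X ↔
      ∀ φ : X → (ℕ → ↥Fr),
        LSC (fun x : X => {A : ℕ → ↥Fr |
          ∀ k, ∀ n, (A k : PN) n = true → (φ x k : PN) n = true}) →
        ∃ f : ℕ → ℕ, ∀ x : X, ∀ᶠ k in atTop, (φ x k : PN) (f k) = true := by
  constructor
  · intro hS φ hφ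
    exact hS _ (isOpen_setOf_apply_eq_true_of_LSC hφ) fun k x => mem_Fr_iff.1 (φ x k).2
  · intro h U hUo hU
    obtain ⟨f, hf⟩ := h _ (LSC_frBelow_coverIndicator hUo hU)
    exact ⟨f, fun x => (hf x).mono fun k hk => by simpa [coverIndicator] using hk⟩
end
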